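/- For all real z and α: Σ_{k=1}^∞ k·J_{4k}(z)·sin(4kα) = (z/16)[sin(z·sin α)·cos α − sin(z·cos α)·sin α]. -/

import Mathlib

open scoped Real

/-- Bessel function of the first kind of integer order `m`,
defined by `J_m(z) = (1/2π) ∫_0^{2π} e^{i z sin θ - i m θ} dθ`. -/
noncomputable def besselJ (m : ℤ) (z : ℂ) : ℂ :=
  (1 / (2 * Real.pi)) * ∫ θ in (0:ℝ)..(2 * Real.pi),
    Complex.exp (z * Complex.sin (θ:ℂ) * Complex.I - (m:ℂ) * (θ:ℂ) * Complex.I)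

/-!
Write `g θ = exp (i z sin θ)`, so that `J_n(z)` is the `n`-th Fourier coefficient of `g` and
`i n J_n(z)` that of `g' θ = i z cos θ g θ`. Since `g'` is smooth and periodic, its Fourier
series `∑ i n J_n(z) e^{inθ}` converges absolutely to `g'` everywhere. Summing it over the four
points `α + kπ/2` kills every frequency `n ≢ 0 (mod 4)` and multiplies the others by `4`;
pairing `n = 4m` with `-n` and using `J_{-n} = J_n` for even `n` turns `e^{inα} - e^{-inα}`
into `2i sin (4mα)`. On the other side, `g'(θ) + g'(θ + π) = -2 z cos θ sin (z sin θ)`, which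
evaluated at `θ = α` and `θ = α + π/2` gives the right-hand side.
-/

open Complex MeasureTheory Set intervalIntegral
open scoped ContDiff Interval

theorem Function.Periodic.deriv {𝕜 F : Type*} [NontriviallyNormedField 𝕜] [NormedAddCommGroup F]
    [NormedSpace 𝕜 F] {f : 𝕜 → F} {c : 𝕜} (hf : Function.Periodic f c) :
    Function.Periodic (deriv f) c := fun x => by
  rw [← deriv_comp_add_const, hf.funext]

theorem Continuous.memLp_restrict_Ioc {E : Type*} [NormedAddCommGroup E] {f : ℝ → E}
    (hf : Continuous f) (p : ENNReal) (a b : ℝ) :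
    MemLp f p (volume.restrict (Ioc a b)) := by
  obtain ⟨C, hC⟩ := (isCompact_Icc (a := a) (b := b)).exists_bound_of_continuousOn hf.continuousOn
  exact MemLp.of_bound hf.aestronglyMeasurable C <|
    (ae_restrict_iff' measurableSet_Ioc).2 <| ae_of_all _ fun x hx => hC x (Ioc_subset_Icc_self hx)

section FourierCoeffOn

variable {a b : ℝ} (hab : a < b) {f f' : ℝ → ℂ}

theorem fourierCoeffOn_deriv_of_hasDerivAt (hf : ∀ x ∈ [[a, b]], HasDerivAt f (f' x) x)
    (hf' : IntervalIntegrable f' volume a b) (hfab : f b = f a) (n : ℤ) :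
    fourierCoeffOn hab f' n = 2 * π * I * n / (b - a) * fourierCoeffOn hab f n := by
  have hba : (b : ℂ) - a ≠ 0 := by exact_mod_cast (sub_pos.mpr hab).ne'
  rcases eq_or_ne n 0 with rfl | hn
  · rw [fourierCoeffOn_eq_integral]
    simp only [neg_zero, fourier_zero, one_smul, Int.cast_zero, mul_zero, zero_div, zero_mul]
    rw [integral_eq_sub_of_hasDerivAt hf hf', hfab, sub_self, smul_zero]
  · rw [fourierCoeffOn_of_hasDerivAt hab hn hf hf', hfab, sub_self, mul_zero, zero_sub]
    have : (n : ℂ) ≠ 0 := Int.cast_ne_zero.mpr hn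
    field_simp

theorem summable_fourierCoeffOn_of_hasDerivAt (hf : ∀ x ∈ [[a, b]], HasDerivAt f (f' x) x)
    (hf' : MemLp f' 2 (volume.restrict (Ioc a b))) (hfab : f b = f a) :
    Summable (fourierCoeffOn hab f) := by
  set κ : ℝ := 2 * π / (b - a)
  have hκ : 0 < κ := div_pos Real.two_pi_pos (sub_pos.mpr hab)
  have hint : IntervalIntegrable f' volume a b :=
    (intervalIntegrable_iff_integrableOn_Ioc_of_le hab.le).mpr (hf'.integrable one_le_two)
  have hnorm (n : ℤ) : ‖fourierCoeffOn hab f' n‖ = κ * |(n : ℝ)| * ‖fourierCoeffOn hab f n‖ := by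
    have hκn : (2 * π * I * n / (b - a) : ℂ) = ((κ * n : ℝ) : ℂ) * I := by
      push_cast [κ]; ring
    rw [fourierCoeffOn_deriv_of_hasDerivAt hab hf hint hfab, hκn, norm_mul, norm_mul, norm_I,
      mul_one, norm_real, Real.norm_eq_abs, abs_mul, abs_of_pos hκ]
  -- `‖c_n(f)‖ = ‖c_n(f')‖ / (κ |n|) ≤ ‖c_n(f')‖² + (κ |n|)⁻²`, and both bounds are summable,
  -- the first by Parseval for `f'`.
  have hsq : Summable fun n => ‖fourierCoeffOn hab f' n‖ ^ 2 :=
    (hasSum_sq_fourierCoeffOn hab hf').summable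
  have hinv : Summable fun n : ℤ => 1 / (n : ℝ) ^ 2 := Real.summable_one_div_int_pow.mpr one_lt_two
  refine .of_norm_bounded_eventually (hsq.add (hinv.mul_left (κ⁻¹ ^ 2))) ?_
  filter_upwards [(finite_singleton (0 : ℤ)).eventually_cofinite_notMem] with n hn0
  have hn : 0 < |(n : ℝ)| := abs_pos.mpr (Int.cast_ne_zero.mpr hn0)
  have hc : ‖fourierCoeffOn hab f n‖ = ‖fourierCoeffOn hab f' n‖ * (κ⁻¹ * (1 / |(n : ℝ)|)) := by
    rw [hnorm]; field_simp
  have hy : κ⁻¹ ^ 2 * (1 / (n : ℝ) ^ 2) = (κ⁻¹ * (1 / |(n : ℝ)|)) ^ 2 := by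
    rw [mul_pow, one_div_pow, sq_abs]
  rw [hc, hy]
  linarith [two_mul_le_add_sq ‖fourierCoeffOn hab f' n‖ (κ⁻¹ * (1 / |(n : ℝ)|)),
    mul_nonneg (norm_nonneg (fourierCoeffOn hab f' n)) (by positivity : 0 ≤ κ⁻¹ * (1 / |(n : ℝ)|))]

theorem hasSum_fourierCoeffOn_smul_fourier (hf : Continuous f) (hper : Function.Periodic f (b - a))
    (hsum : Summable (fourierCoeffOn hab f)) (x : ℝ) :
    HasSum (fun n => fourierCoeffOn hab f n • fourier n (x : AddCircle (b - a))) (f x) := by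
  have : Fact (0 < b - a) := ⟨sub_pos.mpr hab⟩
  let F : C(AddCircle (b - a), ℂ) :=
    ⟨AddCircle.liftIoc (b - a) a f, AddCircle.liftIoc_continuous (hper a).symm hf.continuousOn⟩
  have hFx : F x = f x := by
    show f _ = _
    rw [← hper.lift_coe, AddCircle.coe_equivIoc, hper.lift_coe]
  rw [← hFx]
  exact has_pointwise_sum_fourier_series_of_summable (f := F) hsum x

end FourierCoeffOn

theorem sum_range_exp_mul_add_two_pi_div (N : ℕ) (n : ℤ) (α : ℝ) :
    ∑ k ∈ Finset.range N, exp (n * (α + 2 * π * k / N : ℝ) * I) =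
      if (N : ℤ) ∣ n then N * exp (n * α * I) else 0 := by
  rcases eq_or_ne N 0 with rfl | hN
  · simp
  set ζ := exp (2 * π * I * n / N)
  have hterm (k : ℕ) : exp (n * (α + 2 * π * k / N : ℝ) * I) = exp (n * α * I) * ζ ^ k := by
    rw [← exp_nat_mul, ← exp_add]; push_cast; ring_nf
  have hN' : (N : ℂ) ≠ 0 := Nat.cast_ne_zero.mpr hN
  have hζ : ζ = 1 ↔ (N : ℤ) ∣ n := by
    rw [exp_eq_one_iff]
    constructor
    · rintro ⟨m, hm⟩
      refine ⟨m, ?_⟩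
      have hπ : (π : ℂ) ≠ 0 := ofReal_ne_zero.mpr Real.pi_ne_zero
      field_simp at hm
      exact_mod_cast hm
    · rintro ⟨m, rfl⟩
      exact ⟨m, by push_cast; field_simp⟩
  simp_rw [hterm, ← Finset.mul_sum]
  split_ifs with hdvd
  · simp [hζ.mpr hdvd, mul_comm]
  · have hζN : ζ ^ N = 1 := by
      rw [← exp_nat_mul, ← exp_int_mul_two_pi_mul_I n]
      congr 1
      field_simp
    rw [geom_sum_eq (mt hζ.mp hdvd), hζN, sub_self, zero_div, mul_zero]

theorem hasSum_ite_dvd_of_hasSum_mul_exp {c : ℤ → ℂ} {F : ℝ → ℂ}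
    (hF : ∀ θ : ℝ, HasSum (fun n : ℤ => c n * exp (n * θ * I)) (F θ)) (N : ℕ) (α : ℝ) :
    HasSum (fun n : ℤ => if (N : ℤ) ∣ n then N * c n * exp (n * α * I) else 0)
      (∑ k ∈ Finset.range N, F (α + 2 * π * k / N)) := by
  convert hasSum_sum fun k (_ : k ∈ Finset.range N) => hF (α + 2 * π * k / N) using 1
  funext n
  rw [← Finset.mul_sum, sum_range_exp_mul_add_two_pi_div]
  split_ifs <;> ring

noncomputable def expISin (z : ℂ) (θ : ℝ) : ℂ := exp (z * sin θ * I)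

theorem hasDerivAt_expISin (z : ℂ) (θ : ℝ) :
    HasDerivAt (expISin z) (z * cos θ * I * expISin z θ) θ := by
  have := (((hasDerivAt_sin (θ : ℂ)).comp_ofReal.const_mul z).mul_const I).cexp
  exact this.congr_deriv (by unfold expISin; ring)

theorem contDiff_expISin (z : ℂ) : ContDiff ℝ ∞ (expISin z) := by
  have : ContDiff ℂ ∞ fun w : ℂ => exp (z * sin w * I) := by fun_prop
  exact (this.restrict_scalars ℝ).comp ofRealCLM.contDiff

theorem periodic_expISin (z : ℂ) : Function.Periodic (expISin z) (2 * π) := fun θ => by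
  simp only [expISin, ofReal_add, ofReal_mul, ofReal_ofNat, sin_add_two_pi]

theorem besselJ_eq_fourierCoeffOn (m : ℤ) (z : ℂ) :
    besselJ m z = fourierCoeffOn Real.two_pi_pos (expISin z) m := by
  rw [fourierCoeffOn_eq_integral, besselJ, sub_zero, real_smul]
  push_cast
  congr 1
  refine integral_congr fun θ _ => ?_
  rw [fourier_coe_apply, expISin, smul_eq_mul, ← exp_add]
  have hπ : (π : ℂ) ≠ 0 := ofReal_ne_zero.mpr Real.pi_ne_zero
  congr 1
  push_cast
  field_simp
  ring

theorem besselJ_neg (m : ℤ) (z : ℂ) : besselJ (-m) z = (-1) ^ m * besselJ m z := by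
  set G : ℝ → ℂ := fun θ => exp (z * sin θ * I - m * θ * I)
  have hG : Function.Periodic G (2 * π) := fun θ => by
    simp only [G]
    rw [← mul_one (exp (z * sin θ * I - m * θ * I)), ← exp_int_mul_two_pi_mul_I (-m), ← exp_add]
    push_cast
    rw [sin_add_two_pi]
    ring_nf
  have hreflect (θ : ℝ) : exp (z * sin θ * I - ((-m : ℤ) : ℂ) * θ * I) = (-1) ^ m * G (π - θ) := by
    rw [← exp_pi_mul_I, ← exp_int_mul, ← exp_add]
    push_cast
    rw [sin_pi_sub]
    ring_nf
  rw [besselJ, besselJ, mul_left_comm]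
  congr 1
  calc ∫ θ in (0 : ℝ)..2 * π, exp (z * sin θ * I - ((-m : ℤ) : ℂ) * θ * I)
      = (-1) ^ m * ∫ θ in (0 : ℝ)..2 * π, G (π - θ) := by
        rw [← intervalIntegral.integral_const_mul]; exact integral_congr fun θ _ => hreflect θ
    _ = (-1) ^ m * ∫ θ in (-π)..(-π + 2 * π), G θ := by
        rw [integral_comp_sub_left]; ring_nf
    _ = (-1) ^ m * ∫ θ in (0 : ℝ)..2 * π, G θ := by
        rw [hG.intervalIntegral_add_eq (-π) 0, zero_add]

theorem hasSum_deriv_expISin (z : ℂ) (θ : ℝ) :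
    HasSum (fun n : ℤ => n * I * besselJ n z * exp (n * θ * I)) (deriv (expISin z) θ) := by
  have hg := contDiff_expISin z
  have hg' : ContDiff ℝ ∞ (deriv (expISin z)) := (contDiff_infty_iff_deriv.mp hg).2
  have hper := periodic_expISin z
  have hπ : (π : ℂ) ≠ 0 := ofReal_ne_zero.mpr Real.pi_ne_zero
  have hcoeff (n : ℤ) :
      fourierCoeffOn Real.two_pi_pos (deriv (expISin z)) n = n * I * besselJ n z := by
    rw [fourierCoeffOn_deriv_of_hasDerivAt Real.two_pi_pos
      (fun x _ => (hg.differentiable (by simp)).differentiableAt.hasDerivAt)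
      (hg'.continuous.intervalIntegrable _ _) (by simpa using hper 0),
      besselJ_eq_fourierCoeffOn]
    push_cast
    field_simp
    ring
  have hsum : Summable (fourierCoeffOn Real.two_pi_pos (deriv (expISin z))) :=
    summable_fourierCoeffOn_of_hasDerivAt Real.two_pi_pos
      (fun x _ => (hg'.differentiable (by simp)).differentiableAt.hasDerivAt)
      ((hg'.continuous_deriv (by simp)).memLp_restrict_Ioc 2 0 (2 * π))
      (by simpa using hper.deriv 0)
  convert hasSum_fourierCoeffOn_smul_fourier Real.two_pi_pos hg'.continuous
    (by simpa using hper.deriv) hsum θ using 1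
  funext n
  rw [hcoeff, fourier_coe_apply, smul_eq_mul]
  congr 2
  rw [sub_zero]
  push_cast
  field_simp

theorem deriv_expISin_add_deriv_expISin_add_pi (z : ℂ) (θ : ℝ) :
    deriv (expISin z) θ + deriv (expISin z) (θ + π) = -2 * z * cos θ * sin (z * sin θ) := by
  rw [(hasDerivAt_expISin z θ).deriv, (hasDerivAt_expISin z _).deriv, expISin, expISin]
  push_cast
  rw [cos_add_pi, sin_add_pi, show z * -sin θ * I = -(z * sin θ) * I by ring]
  linear_combination (z * cos θ) * two_sin (z * sin θ)

theorem sum_range_four_deriv_expISin (z : ℂ) (α : ℝ) :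
    ∑ k ∈ Finset.range 4, deriv (expISin z) (α + 2 * π * k / 4) =
      -2 * z * (cos α * sin (z * sin α) - sin α * sin (z * cos α)) := by
  simp only [Finset.sum_range_succ, Finset.sum_range_zero]
  rw [show α + 2 * π * (0 : ℕ) / 4 = α by simp, show α + 2 * π * (1 : ℕ) / 4 = α + π / 2 by
    push_cast; ring, show α + 2 * π * (2 : ℕ) / 4 = α + π by push_cast; ring,
    show α + 2 * π * (3 : ℕ) / 4 = α + π / 2 + π by push_cast; ring]
  have hquarter := deriv_expISin_add_deriv_expISin_add_pi z (α + π / 2)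
  push_cast at hquarter
  rw [cos_add_pi_div_two, sin_add_pi_div_two] at hquarter
  linear_combination deriv_expISin_add_deriv_expISin_add_pi z α + hquarter

theorem hasSum_mul_besselJ_four_mul_mul_exp (z : ℂ) (α : ℝ) :
    HasSum (fun m : ℤ => 16 * m * I * besselJ (4 * m) z * exp (4 * m * α * I))
      (-2 * z * (cos α * sin (z * sin α) - sin α * sin (z * cos α))) := by
  have h4 := hasSum_ite_dvd_of_hasSum_mul_exp (hasSum_deriv_expISin z) 4 α
  push_cast at h4
  rw [sum_range_four_deriv_expISin] at h4
  refine ((mul_right_injective₀ four_ne_zero).hasSum_iff ?_).mpr h4 |>.congr_fun fun m => ?_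
  · rintro n hn
    exact if_neg fun ⟨m, hm⟩ => hn ⟨m, hm.symm⟩
  · simp only [Function.comp_apply, dvd_mul_right, if_true]
    push_cast
    ring

theorem hasSum_mul_besselJ_four_mul_sin (z : ℂ) (α : ℝ) :
    HasSum (fun k : ℕ => ((k : ℂ) + 1) * besselJ (4 * (k + 1)) z * sin (4 * (k + 1) * α))
      (z / 16 * (sin (z * sin α) * cos α - sin (z * cos α) * sin α)) := by
  set φ : ℤ → ℂ := fun m => 16 * m * I * besselJ (4 * m) z * exp (4 * m * α * I)
  have hpair (m : ℕ) : φ m + φ (-m) = -32 * (m * besselJ (4 * m) z * sin (4 * m * α)) := by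
    simp only [φ]
    rw [show 4 * -(m : ℤ) = -(4 * m) by ring, besselJ_neg, Even.neg_one_zpow ⟨2 * m, by ring⟩]
    push_cast
    rw [show 4 * -(m : ℂ) * α * I = -(4 * m * α) * I by ring]
    linear_combination (16 * m * besselJ (4 * m) z) * two_sin (4 * m * α)
  have hφ0 : φ 0 = 0 := by simp [φ]
  have hsum : HasSum (fun m : ℕ => φ m + φ (-m)) (_ + φ 0) :=
    (hasSum_mul_besselJ_four_mul_mul_exp z α).nat_add_neg
  rw [← hasSum_nat_add_iff' 1] at hsum
  simp only [Finset.sum_range_one, hpair, hφ0, Nat.cast_zero, zero_mul, mul_zero, add_zero,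
    sub_zero] at hsum
  have hval : -1 / 32 * (-2 * z * (cos α * sin (z * sin α) - sin α * sin (z * cos α))) =
      z / 16 * (sin (z * sin α) * cos α - sin (z * cos α) * sin α) := by ring
  rw [← hval]
  exact (hsum.mul_left (-1 / 32)).congr_fun fun k => by push_cast; ring

theorem statement7 (z α : ℝ) :
    (∑' k : ℕ, ((k : ℂ) + 1) * besselJ (4 * (k + 1)) z * (Real.sin (4 * (k + 1) * α) : ℂ)) =
      ((z : ℂ) / 16) *
        ((Real.sin (z * Real.sin α) * Real.cos α - Real.sin (z * Real.cos α) * Real.sin α : ℝ) : ℂ) := by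
  push_cast
  exact (hasSum_mul_besselJ_four_mul_sin z α).tsum_eq
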